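/- arXiv:2603.24951 — 3 statements merged into one kernel-verified Lean document; each statement's English description precedes it below -/
import Mathlib

section
/- Let Ω ⊆ ℝⁿ be an open convex set and Ω₀ ⊆ Ω a Lebesgue measurable set with μ(Ω \ Ω₀) = 0, where μ is Lebesgue measure on ℝⁿ. Let a, b ∈ Ω be distinct points. Then there exist sequences (aᵏ) ⊆ Ω and (bᵏ) ⊆ Ω with aᵏ → a and bᵏ → b such that for every k, the one-dimensional Lebesgue measure of the set {t ∈ [0,1] : aᵏ + t(bᵏ − aᵏ) ∈ Ω₀} equals 1. -/
/-!
By Fubini's theorem and translation invariance of `μ`, for almost every `x` the line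
`t ↦ x + t (b - a)` meets the null set `Ω \ Ω₀` in a `λ`-null set. Such good points are dense,
and since the segment `[a, b]` is a compact subset of the open set `Ω`, every `x` close enough to
`a` has `[x, x + (b - a)] ⊆ Ω`. Taking good points `aᵏ → a` of this kind and `bᵏ = aᵏ + (b - a)`,
almost every `t ∈ [0, 1]` puts `aᵏ + t (bᵏ - aᵏ)` in `Ω₀`.
-/

open scoped RealInnerProductSpace
open Filter Topology MeasureTheory Set

noncomputable section

variable {n : ℕ}

/-- Convexity of an extended-real-valued function `φ : ℝⁿ → ℝ ∪ {+∞}`. -/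
def ERealConvex {F : Type*} [AddCommGroup F] [Module ℝ F] (φ : F → EReal) : Prop :=
  ∀ x y : F, ∀ a b : ℝ, 0 ≤ a → 0 ≤ b → a + b = 1 →
    φ (a • x + b • y) ≤ (a : EReal) * φ x + (b : EReal) * φ y

/-- The shifted function `x ↦ φ(x) + (ρ/2)‖x‖²`. -/
def shiftFun (ρ : ℝ) (φ : EuclideanSpace ℝ (Fin n) → EReal) :
    EuclideanSpace ℝ (Fin n) → EReal :=
  fun x => φ x + (((ρ / 2) * ‖x‖ ^ 2 : ℝ) : EReal)

/-- The subdifferential of a `ρ`-weakly convex function. -/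
def subdiff (ρ : ℝ) (φ : EuclideanSpace ℝ (Fin n) → EReal)
    (x : EuclideanSpace ℝ (Fin n)) : Set (EuclideanSpace ℝ (Fin n)) :=
  {v | φ x ≠ ⊤ ∧
    ∀ u, φ x + ((⟪v, u - x⟫ - (ρ / 2) * ‖u - x‖ ^ 2 : ℝ) : EReal) ≤ φ u}

/-- Graph of the subdifferential mapping. -/
def gphSubdiff (ρ : ℝ) (φ : EuclideanSpace ℝ (Fin n) → EReal) :
    Set (EuclideanSpace ℝ (Fin n) × EuclideanSpace ℝ (Fin n)) :=
  {p | p.2 ∈ subdiff ρ φ p.1}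

/-- The (Bouligand–Severi) tangent/contingent cone to `S` at `z`. -/
def contTangentCone {F : Type*} [NormedAddCommGroup F] [NormedSpace ℝ F]
    (S : Set F) (z : F) : Set F :=
  {w | ∃ (t : ℕ → ℝ) (ws : ℕ → F), (∀ k, 0 < t k) ∧ Tendsto t atTop (𝓝 0) ∧
    Tendsto ws atTop (𝓝 w) ∧ ∀ k, z + t k • ws k ∈ S}

/-- Inner product of pairs in `ℝⁿ × ℝⁿ`. -/
def pairInner (p q : EuclideanSpace ℝ (Fin n) × EuclideanSpace ℝ (Fin n)) : ℝ :=
  ⟪p.1, q.1⟫ + ⟪p.2, q.2⟫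

/-- The (Fréchet) regular normal cone to `S` at `z`. -/
def regNormalCone (S : Set (EuclideanSpace ℝ (Fin n) × EuclideanSpace ℝ (Fin n)))
    (z : EuclideanSpace ℝ (Fin n) × EuclideanSpace ℝ (Fin n)) :
    Set (EuclideanSpace ℝ (Fin n) × EuclideanSpace ℝ (Fin n)) :=
  {v | ∀ ε > (0 : ℝ), ∃ δ > (0 : ℝ), ∀ u ∈ S, ‖u - z‖ < δ →
      pairInner v (u - z) ≤ ε * ‖u - z‖}

/-- The (Mordukhovich) limiting normal cone to `S` at `z`. -/
def limNormalCone (S : Set (EuclideanSpace ℝ (Fin n) × EuclideanSpace ℝ (Fin n)))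
    (z : EuclideanSpace ℝ (Fin n) × EuclideanSpace ℝ (Fin n)) :
    Set (EuclideanSpace ℝ (Fin n) × EuclideanSpace ℝ (Fin n)) :=
  {v | ∃ zs vs : ℕ → EuclideanSpace ℝ (Fin n) × EuclideanSpace ℝ (Fin n),
    (∀ k, zs k ∈ S) ∧ Tendsto zs atTop (𝓝 z) ∧ Tendsto vs atTop (𝓝 v) ∧
    ∀ k, vs k ∈ regNormalCone S (zs k)}

/-- The Moreau envelope `e_λ φ`. -/
def moreau (lam : ℝ) (φ : EuclideanSpace ℝ (Fin n) → EReal)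
    (x : EuclideanSpace ℝ (Fin n)) : EReal :=
  ⨅ y, (φ y + ((‖y - x‖ ^ 2 / (2 * lam) : ℝ) : EReal))

/-- Second-order difference quotient `Δ²_τ φ(x,v)(u)`. -/
def delta2 (φ : EuclideanSpace ℝ (Fin n) → EReal) (x v : EuclideanSpace ℝ (Fin n))
    (τ : ℝ) (u : EuclideanSpace ℝ (Fin n)) : EReal :=
  ((2 / τ ^ 2 : ℝ) : EReal) * (φ (x + τ • u) - φ x - ((τ * ⟪v, u⟫ : ℝ) : EReal))

/-- The second subderivative `d²φ(x,v)(w)`. -/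
def secondSubderiv (φ : EuclideanSpace ℝ (Fin n) → EReal)
    (x v w : EuclideanSpace ℝ (Fin n)) : EReal :=
  Filter.liminf (fun p : ℝ × EuclideanSpace ℝ (Fin n) => delta2 φ x v p.1 p.2)
    ((𝓝[>] (0 : ℝ)) ×ˢ 𝓝 w)

/-- Twice epi-differentiability of `φ` at `x` for `v`. -/
def TwiceEpiDiff (φ : EuclideanSpace ℝ (Fin n) → EReal)
    (x v : EuclideanSpace ℝ (Fin n)) : Prop :=
  ∀ w : EuclideanSpace ℝ (Fin n), ∀ τ : ℕ → ℝ, (∀ k, 0 < τ k) →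
    Tendsto τ atTop (𝓝 0) →
    ∃ ws : ℕ → EuclideanSpace ℝ (Fin n), Tendsto ws atTop (𝓝 w) ∧
      Tendsto (fun k => delta2 φ x v (τ k) (ws k)) atTop (𝓝 (secondSubderiv φ x v w))

/-- Generalized twice differentiability of `φ` at `x` for `v`. -/
def GenTwiceDiff (φ : EuclideanSpace ℝ (Fin n) → EReal)
    (x v : EuclideanSpace ℝ (Fin n)) : Prop :=
  TwiceEpiDiff φ x v ∧
    ∃ (A : EuclideanSpace ℝ (Fin n) →ₗ[ℝ] EuclideanSpace ℝ (Fin n))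
      (L : Submodule ℝ (EuclideanSpace ℝ (Fin n))),
      (∀ u w, ⟪A u, w⟫ = ⟪u, A w⟫) ∧
      (∀ w ∈ L, secondSubderiv φ x v w = ((⟪w, A w⟫ : ℝ) : EReal)) ∧
      (∀ w ∉ L, secondSubderiv φ x v w = (⊤ : EReal))

theorem eventually_nhds_forall_Icc_add_smul_mem {E : Type*} [TopologicalSpace E] [AddCommGroup E]
    [Module ℝ E] [ContinuousAdd E] [ContinuousSMul ℝ E] {Ω : Set E} (hΩ : IsOpen Ω) {a d : E}
    (h : ∀ t ∈ Icc (0 : ℝ) 1, a + t • d ∈ Ω) :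
    ∀ᶠ x in 𝓝 a, ∀ t ∈ Icc (0 : ℝ) 1, x + t • d ∈ Ω :=
  isCompact_Icc.eventually_forall_of_forall_eventually fun t ht =>
    (hΩ.preimage (by fun_prop : Continuous fun z : E × ℝ => z.1 + z.2 • d)).mem_nhds (h t ht)

theorem MeasureTheory.Measure.exists_seq_tendsto_forall_of_ae_of_eventually {X : Type*}
    [TopologicalSpace X] [FirstCountableTopology X] [MeasurableSpace X] (μ : Measure X)
    [μ.IsOpenPosMeasure] {p q : X → Prop} {a : X} (hp : ∀ᵐ x ∂μ, p x) (hq : ∀ᶠ x in 𝓝 a, q x) :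
    ∃ xs : ℕ → X, Tendsto xs atTop (𝓝 a) ∧ ∀ k, p (xs k) ∧ q (xs k) := by
  have hcl : a ∈ closure {x | p x ∧ q x} := mem_closure_iff_nhds.2 fun W hW => by
    obtain ⟨x, ⟨hxW, hxq⟩, hxp⟩ :=
      Measure.exists_mem_of_measure_ne_zero_of_ae (measure_pos_of_mem_nhds μ (inter_mem hW hq)).ne'
        (ae_restrict_of_ae hp)
    exact ⟨x, hxW, hxp, hxq⟩
  obtain ⟨xs, hmem, hlim⟩ := mem_closure_iff_seq_limit.1 hcl
  exact ⟨xs, hlim, hmem⟩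

theorem ae_ae_add_smul_notMem_of_measure_eq_zero {E : Type*} [NormedAddCommGroup E]
    [NormedSpace ℝ E] [MeasurableSpace E] [BorelSpace E] (μ : Measure E) [SFinite μ]
    [μ.IsAddRightInvariant] {N : Set E} (hN : μ N = 0) (d : E) :
    ∀ᵐ x ∂μ, ∀ᵐ t : ℝ, x + t • d ∉ N := by
  obtain ⟨M, hNM, hM, hM0⟩ := exists_measurable_superset_of_null hN
  have hslice (t : ℝ) : ∀ᵐ x ∂μ, x + t • d ∉ M := by
    rw [ae_iff]
    simp only [not_not]
    exact (measure_preimage_add_right μ (t • d) M).trans hM0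
  have hmeas : MeasurableSet {z : E × ℝ | z.1 + z.2 • d ∉ M} :=
    ((continuous_fst.add (continuous_snd.smul continuous_const)).measurable hM).compl
  filter_upwards [(Measure.ae_ae_comm (ν := volume) hmeas).2 (ae_of_all _ hslice)] with x hx
  filter_upwards [hx] with t ht using fun htN => ht (hNM htN)

theorem volume_setOf_mem_Icc_and_eq_one {P : ℝ → Prop} (h : ∀ᵐ t, t ∈ Icc (0 : ℝ) 1 → P t) :
    volume {t : ℝ | t ∈ Icc (0 : ℝ) 1 ∧ P t} = 1 := by
  have hae : {t : ℝ | t ∈ Icc (0 : ℝ) 1 ∧ P t} =ᵐ[volume] Icc (0 : ℝ) 1 := by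
    filter_upwards [h] with t ht
    exact propext ⟨And.left, fun hI => ⟨hI, ht hI⟩⟩
  rw [measure_congr hae, Real.volume_Icc, sub_zero, ENNReal.ofReal_one]

theorem statement2_general (n : ℕ) (Ω Ω₀ : Set (EuclideanSpace ℝ (Fin n)))
    (hopen : IsOpen Ω) (hconv : Convex ℝ Ω)
    (hnull : volume (Ω \ Ω₀) = 0)
    (a b : EuclideanSpace ℝ (Fin n)) (ha : a ∈ Ω) (hb : b ∈ Ω) :
    ∃ aseq bseq : ℕ → EuclideanSpace ℝ (Fin n),
      (∀ k, aseq k ∈ Ω) ∧ (∀ k, bseq k ∈ Ω) ∧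
      Tendsto aseq atTop (𝓝 a) ∧ Tendsto bseq atTop (𝓝 b) ∧
      ∀ k, volume {t : ℝ | t ∈ Icc (0 : ℝ) 1 ∧
        aseq k + t • (bseq k - aseq k) ∈ Ω₀} = 1 := by
  set d := b - a
  have hseg : ∀ᶠ x in 𝓝 a, ∀ t ∈ Icc (0 : ℝ) 1, x + t • d ∈ Ω :=
    eventually_nhds_forall_Icc_add_smul_mem hopen fun t ht => hconv.add_smul_sub_mem ha hb ht
  obtain ⟨xs, hlim, hgood⟩ := volume.exists_seq_tendsto_forall_of_ae_of_eventually
    (ae_ae_add_smul_notMem_of_measure_eq_zero volume hnull d) hseg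
  refine ⟨xs, fun k => xs k + d, fun k => by simpa using (hgood k).2 0 (by norm_num),
    fun k => by simpa using (hgood k).2 1 (by norm_num), hlim,
    by simpa [d] using hlim.add_const d, fun k => ?_⟩
  simp only [add_sub_cancel_left]
  apply volume_setOf_mem_Icc_and_eq_one
  filter_upwards [(hgood k).1] with t hnotMem hI
  by_contra hnot
  exact hnotMem ⟨(hgood k).2 t hI, hnot⟩

/-- approximating segments meeting a full-measure subset of an open
convex set in a set of full one-dimensional measure. -/
theorem statement2 (n : ℕ) (Ω Ω₀ : Set (EuclideanSpace ℝ (Fin n)))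
    (hopen : IsOpen Ω) (hconv : Convex ℝ Ω) (hsub : Ω₀ ⊆ Ω)
    (hmeas : MeasurableSet Ω₀) (hnull : volume (Ω \ Ω₀) = 0)
    (a b : EuclideanSpace ℝ (Fin n)) (ha : a ∈ Ω) (hb : b ∈ Ω) (hab : a ≠ b) :
    ∃ aseq bseq : ℕ → EuclideanSpace ℝ (Fin n),
      (∀ k, aseq k ∈ Ω) ∧ (∀ k, bseq k ∈ Ω) ∧
      Tendsto aseq atTop (𝓝 a) ∧ Tendsto bseq atTop (𝓝 b) ∧
      ∀ k, volume {t : ℝ | t ∈ Icc (0 : ℝ) 1 ∧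
        aseq k + t • (bseq k - aseq k) ∈ Ω₀} = 1 :=
  statement2_general n Ω Ω₀ hopen hconv hnull a b ha hb

end
end

section
/- Let Ω ⊆ ℝⁿ be a nonempty open convex set and φ : ℝⁿ → ℝ a function that is (Fréchet) differentiable at every point of Ω with gradient ∇φ Lipschitz continuous on Ω. Then φ is convex on Ω if and only if for every x ∈ Ω at which ∇φ is differentiable (i.e., φ is twice differentiable at x), the second derivative ∇²φ(x) is positive semidefinite, i.e., ⟨w, ∇²φ(x)w⟩ ≥ 0 for all w ∈ ℝⁿ. -/
open scoped RealInnerProductSpace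
open Filter Topology MeasureTheory Set

noncomputable section

variable {n : ℕ}

/-!
Both conditions are equivalent to monotonicity of the gradient, `0 ≤ ⟪g y - g x, y - x⟫` on `Ω`,
which in turn reduces to one-variable calculus along lines: `φ` is convex iff `t ↦ φ (x + t • e)`
has a monotone derivative `t ↦ ⟪e, g (x + t • e)⟫`, and a monotone function has nonnegative
derivative wherever it is differentiable.

The delicate implication is from the Hessian condition back to monotonicity, because `g` is only
Lipschitz and its derivative exists merely almost everywhere (Rademacher). Averaging over a small
ball removes the exceptional set: `t ↦ ∫ z in closedBall x r, ⟪e, g (z + t • e)⟫` is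
differentiable everywhere, by differentiation under the integral sign, with derivative the
average of `⟪e, g' e⟫ ≥ 0`. Comparing `t = 0` and `t = 1` and letting `r → 0` gives
`0 ≤ ⟪e, g (x + e) - g x⟫`.
-/

open Metric

section MonotoneOperator

variable {E : Type*} [NormedAddCommGroup E] [InnerProductSpace ℝ E]

def MonotoneOperatorOn (g : E → E) (s : Set E) : Prop :=
  ∀ x ∈ s, ∀ y ∈ s, 0 ≤ ⟪g y - g x, y - x⟫

variable {Ω : Set E} {g : E → E}

lemma HasFDerivAt.hasDerivAt_inner_comp_add_smul {H : E →L[ℝ] E} {x e : E} {t : ℝ}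
    (h : HasFDerivAt g H (x + t • e)) :
    HasDerivAt (fun s : ℝ => ⟪e, g (x + s • e)⟫) ⟪e, H e⟫ t := by
  have hline : HasDerivAt (fun s : ℝ => x + s • e) e t := by
    simpa using ((hasDerivAt_id t).smul_const e).const_add x
  exact (hasDerivAt_const t e).inner ℝ (h.comp_hasDerivAt t hline) |>.congr_deriv (by simp)

lemma MonotoneOperatorOn.monotoneOn_inner_comp_add_smul (hg : MonotoneOperatorOn g Ω) (x e : E) :
    MonotoneOn (fun t : ℝ => ⟪e, g (x + t • e)⟫) {t | x + t • e ∈ Ω} := by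
  intro s hs t ht hst
  have h := hg _ hs _ ht
  rw [show x + t • e - (x + s • e) = (t - s) • e by module, real_inner_smul_right,
    real_inner_comm, inner_sub_right] at h
  rcases hst.eq_or_lt with rfl | hlt
  · exact le_rfl
  · nlinarith

lemma MonotoneOperatorOn.inner_map_self_nonneg_of_hasFDerivAt (hg : MonotoneOperatorOn g Ω)
    (hΩ : IsOpen Ω) {x : E} (hx : x ∈ Ω) {H : E →L[ℝ] E} (hH : HasFDerivAt g H x) (w : E) :
    0 ≤ ⟪w, H w⟫ := by
  have hline : {t : ℝ | x + t • w ∈ Ω} ∈ 𝓝 0 :=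
    (continuous_const.add (continuous_id.smul continuous_const)).continuousAt.preimage_mem_nhds
      (by simpa using hΩ.mem_nhds hx)
  have hacc : AccPt (0 : ℝ) (𝓟 {t : ℝ | x + t • w ∈ Ω}) :=
    ((PerfectSpace.univ_preperfect 0 (mem_univ _)).nhds_inter hline).mono
      (principal_mono.2 inter_subset_left)
  have hderiv : HasDerivAt (fun t : ℝ => ⟪w, g (x + t • w)⟫) ⟪w, H w⟫ 0 :=
    HasFDerivAt.hasDerivAt_inner_comp_add_smul (by simpa using hH)
  exact hderiv.hasDerivWithinAt.nonneg_of_monotoneOn hacc (hg.monotoneOn_inner_comp_add_smul x w)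

end MonotoneOperator

section Gradient

variable {E : Type*} [NormedAddCommGroup E] [InnerProductSpace ℝ E] [CompleteSpace E]
  {Ω : Set E} {φ : E → ℝ} {g : E → E}

lemma HasGradientAt.hasDerivAt_comp_add_smul {v x e : E} {t : ℝ}
    (h : HasGradientAt φ v (x + t • e)) :
    HasDerivAt (fun s : ℝ => φ (x + s • e)) ⟪v, e⟫ t := by
  have hline : HasDerivAt (fun s : ℝ => x + s • e) e t := by
    simpa using ((hasDerivAt_id t).smul_const e).const_add x
  simpa [Function.comp_def] using h.hasFDerivAt.comp_hasDerivAt t hline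

lemma ConvexOn.monotoneOperatorOn_of_hasGradientAt (hφ : ConvexOn ℝ Ω φ)
    (hgrad : ∀ x ∈ Ω, HasGradientAt φ (g x) x) : MonotoneOperatorOn g Ω := by
  intro x hx y hy
  have hline : ConvexOn ℝ (Icc 0 1) (fun t : ℝ => φ (x + t • (y - x))) := by
    have hcomp : (fun t : ℝ => φ (x + t • (y - x))) = φ ∘ AffineMap.lineMap x y := by
      ext t; simp [AffineMap.lineMap_apply_module', add_comm]
    rw [hcomp]
    exact (hφ.comp_affineMap _).subset (fun t ht => hφ.1.lineMap_mem hx hy ht) (convex_Icc 0 1)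
  have hderiv (z : E) (hz : z ∈ Ω) (t : ℝ) (ht : x + t • (y - x) = z) :
      HasDerivAt (fun s : ℝ => φ (x + s • (y - x))) ⟪g z, y - x⟫ t :=
    HasGradientAt.hasDerivAt_comp_add_smul (ht ▸ hgrad z hz)
  have h0 := hline.le_slope_of_hasDerivAt (by simp) (by simp) one_pos (hderiv x hx 0 (by simp))
  have h1 := hline.slope_le_of_hasDerivAt (by simp) (by simp) one_pos (hderiv y hy 1 (by simp))
  rw [inner_sub_left]
  linarith

lemma MonotoneOperatorOn.convexOn_of_hasGradientAt (hg : MonotoneOperatorOn g Ω)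
    (hΩ : Convex ℝ Ω) (hgrad : ∀ x ∈ Ω, HasGradientAt φ (g x) x) : ConvexOn ℝ Ω φ := by
  refine ⟨hΩ, fun x hx y hy a b ha hb hab => ?_⟩
  set ℓ := fun t : ℝ => φ (x + t • (y - x))
  have hmem : Icc (0 : ℝ) 1 ⊆ {t | x + t • (y - x) ∈ Ω} := fun t ht =>
    hΩ.add_smul_sub_mem hx hy ht
  have hderiv : ∀ t ∈ Icc (0 : ℝ) 1, HasDerivAt ℓ ⟪g (x + t • (y - x)), y - x⟫ t :=
    fun t ht => HasGradientAt.hasDerivAt_comp_add_smul (hgrad _ (hmem ht))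
  have hℓ : ConvexOn ℝ (Icc 0 1) ℓ := by
    refine MonotoneOn.convexOn_of_deriv (convex_Icc 0 1)
      (fun t ht => (hderiv t ht).continuousAt.continuousWithinAt)
      (fun t ht => (hderiv t (interior_subset ht)).differentiableAt.differentiableWithinAt) ?_
    refine ((hg.monotoneOn_inner_comp_add_smul x (y - x)).mono
      (interior_subset.trans hmem)).congr fun t ht => ?_
    rw [(hderiv t (interior_subset ht)).deriv, real_inner_comm]
  have hconv := hℓ.2 (show (0 : ℝ) ∈ Icc 0 1 by simp) (show (1 : ℝ) ∈ Icc 0 1 by simp) ha hb hab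
  have hab' : x + b • (y - x) = a • x + b • y := by
    rw [eq_sub_of_add_eq hab]; module
  simpa [ℓ, hab'] using hconv

end Gradient

theorem LipschitzOnWith.ae_differentiableAt_of_isOpen {E F : Type*} [NormedAddCommGroup E]
    [NormedSpace ℝ E] [FiniteDimensional ℝ E] [MeasurableSpace E] [BorelSpace E]
    [NormedAddCommGroup F] [NormedSpace ℝ F] [FiniteDimensional ℝ F]
    {μ : Measure E} [μ.IsAddHaarMeasure] {C : NNReal} {f : E → F} {s : Set E}
    (hf : LipschitzOnWith C f s) (hs : IsOpen s) :
    ∀ᵐ x ∂μ, x ∈ s → DifferentiableAt ℝ f x := by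
  filter_upwards [hf.ae_differentiableWithinAt_of_mem] with x hx hxs
  exact (hx hxs).differentiableAt (hs.mem_nhds hxs)

section Averaging

variable {E : Type*} [NormedAddCommGroup E] [InnerProductSpace ℝ E] [FiniteDimensional ℝ E]
  [MeasurableSpace E] [BorelSpace E] (μ : Measure E) [μ.IsAddHaarMeasure]
  {Ω : Set E} {g : E → E} {K : NNReal} {B : Set E} {V : Set ℝ}

lemma hasDerivAt_setIntegral_inner_comp_add_smul (hΩ : IsOpen Ω) (hg : LipschitzOnWith K g Ω)
    (hB : IsCompact B) (hV : IsOpen V) {e : E} (hBV : ∀ z ∈ B, ∀ t ∈ V, z + t • e ∈ Ω)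
    {t₀ : ℝ} (ht₀ : t₀ ∈ V) :
    HasDerivAt (fun t => ∫ z in B, ⟪e, g (z + t • e)⟫ ∂μ)
      (∫ z in B, ⟪e, fderiv ℝ g (z + t₀ • e) e⟫ ∂μ) t₀ := by
  obtain ⟨ε, hε, hball⟩ := Metric.isOpen_iff.mp hV t₀ ht₀
  have hcont (t : ℝ) (ht : t ∈ V) : ContinuousOn (fun z => ⟪e, g (z + t • e)⟫) B :=
    (innerSL ℝ e).continuous.comp_continuousOn
      (hg.continuousOn.comp (continuous_add_const _).continuousOn fun z hz => hBV z hz t ht)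
  have hdiff : ∀ᵐ z ∂μ, z + t₀ • e ∈ Ω → DifferentiableAt ℝ g (z + t₀ • e) :=
    (measurePreserving_add_right μ (t₀ • e)).quasiMeasurePreserving.ae
      (hg.ae_differentiableAt_of_isOpen hΩ)
  have hlip (z : E) (hz : z ∈ B) : LipschitzOnWith (‖innerSL ℝ e‖₊ * (K * ‖e‖₊))
      (fun t : ℝ => ⟪e, g (z + t • e)⟫) (ball t₀ ε) := by
    have hline : LipschitzWith ‖e‖₊ (fun t : ℝ => z + t • e) := by
      refine LipschitzWith.of_dist_le_mul fun s t => ?_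
      simp [dist_eq_norm, ← sub_smul, norm_smul, mul_comm]
    exact (innerSL ℝ e).lipschitz.comp_lipschitzOnWith
      (hg.comp hline.lipschitzOnWith fun t ht => hBV z hz t (hball ht))
  have : IsFiniteMeasure (μ.restrict B) := isFiniteMeasure_restrict.2 hB.measure_lt_top.ne
  refine (hasDerivAt_integral_of_dominated_loc_of_lip (ball_mem_nhds t₀ hε)
    (bound := fun _ => (‖innerSL ℝ e‖₊ * (K * ‖e‖₊) : NNReal)) ?_
    ((hcont t₀ ht₀).integrableOn_compact hB) ?_ ?_ (integrable_const _) ?_).2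
  · filter_upwards [ball_mem_nhds t₀ hε] with t ht
    exact (hcont t (hball ht)).aestronglyMeasurable hB.measurableSet
  · exact ((measurable_const.inner ((measurable_fderiv_apply_const ℝ g e).comp
      (measurable_add_const _))).aestronglyMeasurable)
  · rw [ae_restrict_iff' hB.measurableSet]
    exact ae_of_all _ fun z hz => by rw [Real.nnabs_coe]; exact hlip z hz
  · rw [ae_restrict_iff' hB.measurableSet]
    filter_upwards [hdiff] with z hz hzB
    exact (hz (hBV z hzB t₀ ht₀)).hasFDerivAt.hasDerivAt_inner_comp_add_smul

lemma setIntegral_inner_sub_nonneg_of_hessian_nonneg (hΩ : IsOpen Ω) (hg : LipschitzOnWith K g Ω)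
    (hpsd : ∀ x ∈ Ω, ∀ H : E →L[ℝ] E, HasFDerivAt g H x → ∀ w, 0 ≤ ⟪w, H w⟫)
    (hB : IsCompact B) (hV : IsOpen V) (hV01 : Icc 0 1 ⊆ V) {e : E}
    (hBV : ∀ z ∈ B, ∀ t ∈ V, z + t • e ∈ Ω) :
    0 ≤ ∫ z in B, ⟪e, g (z + e) - g z⟫ ∂μ := by
  set F := fun t : ℝ => ∫ z in B, ⟪e, g (z + t • e)⟫ ∂μ
  have hF (t : ℝ) (ht : t ∈ V) := hasDerivAt_setIntegral_inner_comp_add_smul μ hΩ hg hB hV hBV ht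
  -- `fderiv` is `0` wherever `g` is not differentiable, so the integrand is nonnegative everywhere.
  have hF' (t : ℝ) (ht : t ∈ V) : 0 ≤ ∫ z in B, ⟪e, fderiv ℝ g (z + t • e) e⟫ ∂μ := by
    refine setIntegral_nonneg hB.measurableSet fun z hz => ?_
    by_cases hd : DifferentiableAt ℝ g (z + t • e)
    · exact hpsd _ (hBV z hz t ht) _ hd.hasFDerivAt e
    · simp [fderiv_zero_of_not_differentiableAt hd]
  have hmono : MonotoneOn F (Icc 0 1) :=
    monotoneOn_of_hasDerivWithinAt_nonneg (convex_Icc 0 1)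
      (fun t ht => (hF t (hV01 ht)).continuousAt.continuousWithinAt)
      (fun t ht => (hF t (hV01 (interior_subset ht))).hasDerivWithinAt)
      (fun t ht => hF' t (hV01 (interior_subset ht)))
  have hint (t : ℝ) (ht : t ∈ Icc (0 : ℝ) 1) :
      IntegrableOn (fun z => ⟪e, g (z + t • e)⟫) B μ :=
    ((innerSL ℝ e).continuous.comp_continuousOn (hg.continuousOn.comp
      (continuous_add_const _).continuousOn fun z hz => hBV z hz t (hV01 ht)))
      |>.integrableOn_compact hB
  have h01 := hmono (by simp) (by simp) zero_le_one
  have hint0 := hint 0 (by simp)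
  have hint1 := hint 1 (by simp)
  simp only [F, zero_smul, add_zero, one_smul] at h01 hint0 hint1
  simp_rw [inner_sub_right]
  rw [integral_sub hint1 hint0]
  linarith

end Averaging

lemma nonneg_of_forall_setIntegral_closedBall_nonneg {X : Type*} [MetricSpace X]
    [ProperSpace X] [MeasurableSpace X] [OpensMeasurableSpace X] {μ : Measure X}
    [IsFiniteMeasureOnCompacts μ] [μ.IsOpenPosMeasure] {h : X → ℝ} {x : X} {r₀ : ℝ}
    (hr₀ : 0 < r₀) (hh : ContinuousOn h (closedBall x r₀))
    (hint : ∀ r ∈ Ioo 0 r₀, 0 ≤ ∫ z in closedBall x r, h z ∂μ) : 0 ≤ h x := by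
  by_contra! hneg
  obtain ⟨ε, hε, hsmall⟩ := Metric.eventually_nhds_iff.1 <|
    (hh.continuousAt (closedBall_mem_nhds x hr₀)).eventually
      (gt_mem_nhds (by linarith : h x < h x / 2))
  set r := min (ε / 2) (r₀ / 2)
  have hr : 0 < r := by positivity
  have hbound : ∀ z ∈ closedBall x r, h z ≤ h x / 2 := fun z hz =>
    (hsmall ((mem_closedBall.1 hz).trans_lt ((min_le_left _ _).trans_lt (half_lt_self hε)))).le
  have hrr₀ : r ≤ r₀ := (min_le_right _ _).trans (half_le_self hr₀.le)
  have hle := setIntegral_mono_on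
    ((hh.mono (closedBall_subset_closedBall hrr₀)).integrableOn_compact (isCompact_closedBall x r))
    (integrableOn_const (measure_closedBall_lt_top (μ := μ)).ne) measurableSet_closedBall hbound
  rw [setIntegral_const, smul_eq_mul] at hle
  have hpos : 0 < μ.real (closedBall x r) :=
    ENNReal.toReal_pos (measure_closedBall_pos μ x hr).ne' measure_closedBall_lt_top.ne
  have hnonneg := hint r ⟨hr, (min_le_right _ _).trans_lt (half_lt_self hr₀)⟩
  nlinarith

lemma LipschitzOnWith.monotoneOperatorOn_of_hessian_nonneg {E : Type*} [NormedAddCommGroup E]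
    [InnerProductSpace ℝ E] [FiniteDimensional ℝ E] [MeasurableSpace E] [BorelSpace E]
    {Ω : Set E} {g : E → E} {K : NNReal} (hg : LipschitzOnWith K g Ω) (hΩ : IsOpen Ω)
    (hΩc : Convex ℝ Ω) (hpsd : ∀ x ∈ Ω, ∀ H : E →L[ℝ] E, HasFDerivAt g H x → ∀ w, 0 ≤ ⟪w, H w⟫) :
    MonotoneOperatorOn g Ω := by
  intro x hx y hy
  obtain ⟨u, V, hu, hV, hxu, hV01, huV⟩ := generalized_tube_lemma isCompact_singleton
    isCompact_Icc (hΩ.preimage (by fun_prop : Continuous fun p : E × ℝ => p.1 + p.2 • (y - x)))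
    (show {x} ×ˢ Icc 0 1 ⊆ {p : E × ℝ | p.1 + p.2 • (y - x) ∈ Ω} by
      rintro ⟨z, t⟩ ⟨rfl, ht⟩
      exact hΩc.add_smul_sub_mem hx hy ht)
  obtain ⟨r₀, hr₀, hr₀u⟩ := nhds_basis_closedBall.mem_iff.1 (hu.mem_nhds (hxu rfl))
  have hball (z : E) (hz : z ∈ closedBall x r₀) (t : ℝ) (ht : t ∈ V) : z + t • (y - x) ∈ Ω :=
    huV (mk_mem_prod (hr₀u hz) ht)
  have hcont : ContinuousOn (fun z => ⟪y - x, g (z + (y - x)) - g z⟫) (closedBall x r₀) := by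
    have h0 z (hz : z ∈ closedBall x r₀) : z ∈ Ω := by simpa using hball z hz 0 (hV01 (by simp))
    have h1 z (hz : z ∈ closedBall x r₀) : z + (y - x) ∈ Ω := by
      simpa using hball z hz 1 (hV01 (by simp))
    exact continuousOn_const.inner <|
      (hg.continuousOn.comp (continuous_add_const _).continuousOn h1).sub (hg.continuousOn.mono h0)
  have key := nonneg_of_forall_setIntegral_closedBall_nonneg (μ := Measure.addHaar) hr₀ hcont
    fun r hr => setIntegral_inner_sub_nonneg_of_hessian_nonneg _ hΩ hg hpsd
      (isCompact_closedBall x r) hV hV01 fun z hz t ht =>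
        hball z (closedBall_subset_closedBall hr.2.le hz) t ht
  simpa [real_inner_comm] using key

theorem statement3_general (n : ℕ) (Ω : Set (EuclideanSpace ℝ (Fin n)))
    (hopen : IsOpen Ω) (hΩconv : Convex ℝ Ω)
    (φ : EuclideanSpace ℝ (Fin n) → ℝ) (g : EuclideanSpace ℝ (Fin n) → EuclideanSpace ℝ (Fin n))
    (hgrad : ∀ x ∈ Ω, HasGradientAt φ (g x) x)
    (K : NNReal) (hlip : LipschitzOnWith K g Ω) :
    ConvexOn ℝ Ω φ ↔
      ∀ x ∈ Ω, ∀ H : EuclideanSpace ℝ (Fin n) →L[ℝ] EuclideanSpace ℝ (Fin n),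
        HasFDerivAt g H x → ∀ w : EuclideanSpace ℝ (Fin n), 0 ≤ ⟪w, H w⟫ :=
  ⟨fun hφ _ hx _ hH => (hφ.monotoneOperatorOn_of_hasGradientAt hgrad)
      |>.inner_map_self_nonneg_of_hasFDerivAt hopen hx hH,
    fun hpsd => (hlip.monotoneOperatorOn_of_hessian_nonneg hopen hΩconv hpsd)
      |>.convexOn_of_hasGradientAt hΩconv hgrad⟩

/-- a differentiable function with Lipschitz gradient on an open
convex set is convex there iff its Hessian is positive semidefinite wherever the
gradient is differentiable. -/
theorem statement3 (n : ℕ) (Ω : Set (EuclideanSpace ℝ (Fin n)))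
    (hne : Ω.Nonempty) (hopen : IsOpen Ω) (hΩconv : Convex ℝ Ω)
    (φ : EuclideanSpace ℝ (Fin n) → ℝ) (g : EuclideanSpace ℝ (Fin n) → EuclideanSpace ℝ (Fin n))
    (hgrad : ∀ x ∈ Ω, HasGradientAt φ (g x) x)
    (K : NNReal) (hlip : LipschitzOnWith K g Ω) :
    ConvexOn ℝ Ω φ ↔
      ∀ x ∈ Ω, ∀ H : EuclideanSpace ℝ (Fin n) →L[ℝ] EuclideanSpace ℝ (Fin n),
        HasFDerivAt g H x → ∀ w : EuclideanSpace ℝ (Fin n), 0 ≤ ⟪w, H w⟫ :=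
  statement3_general n Ω hopen hΩconv φ g hgrad K hlip

end
end

section
/- Let Ω ⊆ ℝⁿ be a nonempty open convex set, φ : ℝⁿ → ℝ a function that is (Fréchet) differentiable at every point of Ω with gradient ∇φ Lipschitz continuous on Ω, and κ > 0. Let G := {(u, ∇φ(u)) : u ∈ Ω}. Then φ is strongly convex with modulus κ on Ω (i.e., x ↦ φ(x) − (κ/2)‖x‖² is convex on Ω) if and only if for every x ∈ Ω and every (w,z) ∈ T_G(x, ∇φ(x)), one has ⟨z,w⟩ ≥ κ‖w‖². -/
open scoped RealInnerProductSpace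
open Filter Topology MeasureTheory Set

noncomputable section

variable {n : ℕ}

/-!
With `ψ = φ - (κ/2)‖·‖²`, whose gradient is `g - κ • id`, convexity of `ψ` on `Ω` is equivalent
(by restricting to segments and using the one-variable criterion) to strong monotonicity of `g`:
`κ‖y - x‖² ≤ ⟪g y - g x, y - x⟫` on `Ω`. Strong monotonicity passes to the tangent cone of the
graph of `g` after dividing by `t²` and letting `t → 0`.

Conversely, fix a segment `x + t • w` in `Ω`. Since `g` is Lipschitz, the difference quotients
`τ⁻¹ • (g (y + τ • w) - g y)` stay bounded, so along any sequence `τ → 0⁺` a subsequence converges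
to some `z` with `(w, z)` tangent to the graph. Hence the lower right Dini derivative of
`t ↦ ⟪g (x + t • w), w⟫` is at least `κ‖w‖²`, and this continuous function grows at least at that
rate, which is strong monotonicity.
-/

theorem add_mul_sub_le_of_forall_eventually_lt_slope {f : ℝ → ℝ} {a b C : ℝ} (hab : a ≤ b)
    (hf : ContinuousOn f (Icc a b))
    (hslope : ∀ s ∈ Ico a b, ∀ c < C, ∀ᶠ t in 𝓝[>] s, c < slope f s t) :
    f a + C * (b - a) ≤ f b := by
  have h := image_le_of_liminf_slope_right_le_deriv_boundary (f := fun t => -f t)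
    (B := fun t => -f a - C * (t - a)) (B' := fun _ => -C) hf.neg (by simp) (by fun_prop)
    (fun s _ => by simpa using ((((hasDerivAt_id s).sub_const a).const_mul C).const_sub
      (-f a)).hasDerivWithinAt)
    (fun s hs r hr => ((hslope s hs (-r) (by linarith)).mono fun t ht => by
      rw [slope_neg]; linarith).frequently)
    (right_mem_Icc.2 hab)
  linarith

section

variable {E : Type*} [NormedAddCommGroup E] [InnerProductSpace ℝ E]

theorem convexOn_iff_forall_convexOn_comp_add_smul_sub {s : Set E} {f : E → ℝ}
    (hs : Convex ℝ s) :
    ConvexOn ℝ s f ↔ ∀ x ∈ s, ∀ y ∈ s, ConvexOn ℝ (Icc 0 1) fun t : ℝ => f (x + t • (y - x)) := by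
  refine ⟨fun hf x hx y hy => ?_, fun h => ⟨hs, fun x hx y hy a b ha hb hab => ?_⟩⟩
  · refine (hf.comp_affineMap (AffineMap.lineMap x y)).subset (fun t ht => ?_) (convex_Icc 0 1)
      |>.congr fun t _ => by simp [AffineMap.lineMap_apply_module', add_comm]
    simpa [AffineMap.lineMap_apply_module', add_comm] using hs.add_smul_sub_mem hx hy ht
  · have := (h x hx y hy).2 (left_mem_Icc.2 zero_le_one) (right_mem_Icc.2 zero_le_one) ha hb hab
    have hline : x + b • (y - x) = a • x + b • y := by
      rw [eq_sub_of_add_eq hab]; module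
    simpa [hline] using this

section Gradient

variable [CompleteSpace E] {f : E → ℝ} {f' : E → E}

theorem HasGradientAt.hasDerivAt_comp_add_smul_s6 {x w f'₀ : E} {t : ℝ}
    (hf : HasGradientAt f f'₀ (x + t • w)) :
    HasDerivAt (fun t : ℝ => f (x + t • w)) ⟪f'₀, w⟫ t := by
  have hline : HasDerivAt (fun t : ℝ => x + t • w) w t := by
    simpa using ((hasDerivAt_id t).smul_const w).const_add x
  have h := hf.hasFDerivAt.comp_hasDerivAt t hline
  rw [InnerProductSpace.toDual_apply_apply] at h
  exact h

theorem HasGradientAt.sub_half_mul_norm_sq {x f'₀ : E} (hf : HasGradientAt f f'₀ x) (c : ℝ) :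
    HasGradientAt (fun x => f x - c / 2 * ‖x‖ ^ 2) (f'₀ - c • x) x := by
  rw [hasGradientAt_iff_hasFDerivAt] at hf ⊢
  refine (hf.sub ((hasStrictFDerivAt_norm_sq x).hasFDerivAt.const_mul (c / 2))).congr_fderiv ?_
  ext v
  simp
  ring

theorem convexOn_iff_inner_gradient_sub_nonneg {s : Set E} (hs : Convex ℝ s)
    (hf : ∀ x ∈ s, HasGradientAt f (f' x) x) :
    ConvexOn ℝ s f ↔ ∀ x ∈ s, ∀ y ∈ s, 0 ≤ ⟪f' y - f' x, y - x⟫ := by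
  rw [convexOn_iff_forall_convexOn_comp_add_smul_sub hs]
  have hseg : ∀ x ∈ s, ∀ y ∈ s, ∀ t ∈ Icc (0 : ℝ) 1, x + t • (y - x) ∈ s :=
    fun x hx y hy t ht => hs.add_smul_sub_mem hx hy ht
  have hderiv : ∀ x ∈ s, ∀ y ∈ s, ∀ t ∈ Icc (0 : ℝ) 1, HasDerivAt
      (fun t : ℝ => f (x + t • (y - x))) ⟪f' (x + t • (y - x)), y - x⟫ t :=
    fun x hx y hy t ht => (hf _ (hseg x hx y hy t ht)).hasDerivAt_comp_add_smul_s6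
  refine ⟨fun hconv x hx y hy => ?_, fun hmono x hx y hy => ?_⟩
  · have h01 := (hconv x hx y hy).monotoneOn_deriv
      (fun t ht => (hderiv x hx y hy t ht).differentiableAt) (left_mem_Icc.2 zero_le_one)
      (right_mem_Icc.2 zero_le_one) zero_le_one
    rw [(hderiv x hx y hy 0 (left_mem_Icc.2 zero_le_one)).deriv,
      (hderiv x hx y hy 1 (right_mem_Icc.2 zero_le_one)).deriv] at h01
    simpa [inner_sub_left] using h01
  · have hderiv' : ∀ t ∈ interior (Icc (0 : ℝ) 1), HasDerivAt
        (fun t : ℝ => f (x + t • (y - x))) ⟪f' (x + t • (y - x)), y - x⟫ t := by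
      rw [interior_Icc]
      exact fun t ht => hderiv x hx y hy t (Ioo_subset_Icc_self ht)
    refine MonotoneOn.convexOn_of_deriv (convex_Icc 0 1)
      (fun t ht => (hderiv x hx y hy t ht).continuousAt.continuousWithinAt)
      (fun t ht => (hderiv' t ht).differentiableAt.differentiableWithinAt) ?_
    intro t₁ ht₁ t₂ ht₂ h12
    rw [(hderiv' t₁ ht₁).deriv, (hderiv' t₂ ht₂).deriv]
    rcases h12.eq_or_lt with rfl | hlt
    · rfl
    rw [interior_Icc] at ht₁ ht₂
    have h := hmono _ (hseg x hx y hy t₁ (Ioo_subset_Icc_self ht₁))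
      _ (hseg x hx y hy t₂ (Ioo_subset_Icc_self ht₂))
    rw [show x + t₂ • (y - x) - (x + t₁ • (y - x)) = (t₂ - t₁) • (y - x) by module,
      real_inner_smul_right, inner_sub_left] at h
    exact sub_nonneg.1 ((mul_nonneg_iff_of_pos_left (sub_pos.2 hlt)).1 h)

theorem convexOn_sub_half_mul_norm_sq_iff {s : Set E} (hs : Convex ℝ s)
    (hf : ∀ x ∈ s, HasGradientAt f (f' x) x) (c : ℝ) :
    ConvexOn ℝ s (fun x => f x - c / 2 * ‖x‖ ^ 2) ↔
      ∀ x ∈ s, ∀ y ∈ s, c * ‖y - x‖ ^ 2 ≤ ⟪f' y - f' x, y - x⟫ := by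
  rw [convexOn_iff_inner_gradient_sub_nonneg hs fun x hx => (hf x hx).sub_half_mul_norm_sq c]
  refine forall₂_congr fun x _ => forall₂_congr fun y _ => ?_
  have : f' y - c • y - (f' x - c • x) = (f' y - f' x) - c • (y - x) := by module
  rw [this, inner_sub_left, real_inner_smul_left, real_inner_self_eq_norm_sq, sub_nonneg]

end Gradient

section TangentCone

variable {Ω : Set E} {g : E → E} {κ : ℝ}

theorem mul_norm_sq_le_inner_of_mem_contTangentCone
    (hmono : ∀ x ∈ Ω, ∀ y ∈ Ω, κ * ‖y - x‖ ^ 2 ≤ ⟪g y - g x, y - x⟫) {x w z : E} (hx : x ∈ Ω)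
    (hwz : (w, z) ∈ contTangentCone {p : E × E | p.1 ∈ Ω ∧ p.2 = g p.1} (x, g x)) :
    κ * ‖w‖ ^ 2 ≤ ⟪z, w⟫ := by
  obtain ⟨t, ws, ht, -, hws, hmem⟩ := hwz
  have hk : ∀ k, κ * ‖(ws k).1‖ ^ 2 ≤ ⟪(ws k).2, (ws k).1⟫ := by
    intro k
    obtain ⟨hΩ, hg⟩ : x + t k • (ws k).1 ∈ Ω ∧ g x + t k • (ws k).2 = g (x + t k • (ws k).1) :=
      hmem k
    have h := hmono x hx _ hΩ
    rw [← hg, add_sub_cancel_left, add_sub_cancel_left, norm_smul, real_inner_smul_left,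
      real_inner_smul_right, Real.norm_eq_abs, mul_pow, sq_abs] at h
    refine le_of_mul_le_mul_left ?_ (pow_pos (ht k) 2)
    linarith
  exact le_of_tendsto_of_tendsto' ((((continuous_fst.tendsto _).comp hws).norm.pow 2).const_mul κ)
    (((continuous_snd.tendsto _).comp hws).inner ((continuous_fst.tendsto _).comp hws)) hk

theorem mem_contTangentCone_graph_of_tendsto {y w z : E} {τ : ℕ → ℝ} (hτ : ∀ k, 0 < τ k)
    (hτ0 : Tendsto τ atTop (𝓝 0)) (hmem : ∀ k, y + τ k • w ∈ Ω)
    (hq : Tendsto (fun k => (τ k)⁻¹ • (g (y + τ k • w) - g y)) atTop (𝓝 z)) :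
    (w, z) ∈ contTangentCone {p : E × E | p.1 ∈ Ω ∧ p.2 = g p.1} (y, g y) :=
  ⟨τ, fun k => (w, (τ k)⁻¹ • (g (y + τ k • w) - g y)), hτ, hτ0,
    tendsto_const_nhds.prodMk_nhds hq,
    fun k => ⟨hmem k, by simp [smul_inv_smul₀ (hτ k).ne']⟩⟩

theorem LipschitzOnWith.norm_inv_smul_sub_le {K : NNReal} (hg : LipschitzOnWith K g Ω)
    {y w : E} {τ : ℝ} (hτ : 0 < τ) (hy : y ∈ Ω) (hyw : y + τ • w ∈ Ω) :
    ‖τ⁻¹ • (g (y + τ • w) - g y)‖ ≤ K * ‖w‖ := by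
  have h := lipschitzOnWith_iff_norm_sub_le.1 hg hyw hy
  rw [add_sub_cancel_left, norm_smul, Real.norm_eq_abs, abs_of_pos hτ] at h
  rw [norm_smul, Real.norm_eq_abs, abs_inv, abs_of_pos hτ, inv_mul_le_iff₀ hτ]
  linarith

theorem eventually_lt_slope_inner_of_contTangentCone [ProperSpace E] (hΩ : IsOpen Ω)
    {K : NNReal} (hg : LipschitzOnWith K g Ω)
    (htan : ∀ x ∈ Ω, ∀ w z : E,
      (w, z) ∈ contTangentCone {p : E × E | p.1 ∈ Ω ∧ p.2 = g p.1} (x, g x) →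
      κ * ‖w‖ ^ 2 ≤ ⟪z, w⟫)
    {x w : E} {s c : ℝ} (hs : x + s • w ∈ Ω) (hc : c < κ * ‖w‖ ^ 2) :
    ∀ᶠ t in 𝓝[>] s, c < slope (fun t => ⟪g (x + t • w), w⟫) s t := by
  by_contra hfreq
  rw [not_eventually] at hfreq
  have hnear : ∀ᶠ t in 𝓝[>] s, x + t • w ∈ Ω := nhdsWithin_le_nhds <|
    (by fun_prop : Continuous fun t : ℝ => x + t • w).continuousAt.preimage_mem_nhds
      (hΩ.mem_nhds hs)
  obtain ⟨t, ht, hgood⟩ :=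
    exists_seq_forall_of_frequently (hfreq.and_eventually (hnear.and self_mem_nhdsWithin))
  set y := x + s • w
  have hτ : ∀ k, 0 < t k - s := fun k => sub_pos.2 (hgood k).2.2
  have hpt : ∀ k, y + (t k - s) • w = x + t k • w := fun k => by simp only [y]; module
  have hmem : ∀ k, y + (t k - s) • w ∈ Ω := fun k => (hpt k).symm ▸ (hgood k).2.1
  have hslope : ∀ k, slope (fun t => ⟪g (x + t • w), w⟫) s (t k) =
      ⟪(t k - s)⁻¹ • (g (y + (t k - s) • w) - g y), w⟫ := fun k => by
    rw [slope_def_module, hpt, real_inner_smul_left, inner_sub_left, smul_eq_mul]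
  obtain ⟨z, -, φ, hφ, hz⟩ := tendsto_subseq_of_bounded (Metric.isBounded_closedBall (x := 0))
    fun k => mem_closedBall_zero_iff.2 (hg.norm_inv_smul_sub_le (hτ k) hs (hmem k))
  have hτ0 : Tendsto (fun k => t k - s) atTop (𝓝 0) := by
    simpa using (tendsto_nhds_of_tendsto_nhdsWithin ht).sub_const s
  have hzw := htan y hs w z (mem_contTangentCone_graph_of_tendsto (fun k => hτ (φ k))
    (hτ0.comp hφ.tendsto_atTop) (fun k => hmem (φ k)) hz)
  have hzc : ⟪z, w⟫ ≤ c := le_of_tendsto (hz.inner tendsto_const_nhds)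
    (Eventually.of_forall fun k => by
      simpa only [Function.comp_apply, ← hslope, not_lt] using (hgood (φ k)).1)
  linarith

theorem mul_norm_sq_le_inner_sub_of_contTangentCone [ProperSpace E] (hΩ : IsOpen Ω)
    (hΩc : Convex ℝ Ω) {K : NNReal} (hg : LipschitzOnWith K g Ω)
    (htan : ∀ x ∈ Ω, ∀ w z : E,
      (w, z) ∈ contTangentCone {p : E × E | p.1 ∈ Ω ∧ p.2 = g p.1} (x, g x) →
      κ * ‖w‖ ^ 2 ≤ ⟪z, w⟫)
    {x y : E} (hx : x ∈ Ω) (hy : y ∈ Ω) :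
    κ * ‖y - x‖ ^ 2 ≤ ⟪g y - g x, y - x⟫ := by
  have hseg : ∀ t ∈ Icc (0 : ℝ) 1, x + t • (y - x) ∈ Ω :=
    fun t ht => hΩc.add_smul_sub_mem hx hy ht
  have hcont : ContinuousOn (fun t : ℝ => ⟪g (x + t • (y - x)), y - x⟫) (Icc 0 1) :=
    (hg.continuousOn.comp (by fun_prop : Continuous fun t : ℝ => x + t • (y - x)).continuousOn
      hseg).inner continuousOn_const
  have h := add_mul_sub_le_of_forall_eventually_lt_slope zero_le_one hcont fun s hs c hc =>
    eventually_lt_slope_inner_of_contTangentCone hΩ hg htan (hseg s (Ico_subset_Icc_self hs)) hc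
  simp only [zero_smul, add_zero, one_smul, sub_zero, mul_one, add_sub_cancel] at h
  rw [inner_sub_left]
  linarith

end TangentCone

end

theorem statement6_general (n : ℕ) (Ω : Set (EuclideanSpace ℝ (Fin n)))
    (hopen : IsOpen Ω) (hΩconv : Convex ℝ Ω)
    (φ : EuclideanSpace ℝ (Fin n) → ℝ) (g : EuclideanSpace ℝ (Fin n) → EuclideanSpace ℝ (Fin n))
    (hgrad : ∀ x ∈ Ω, HasGradientAt φ (g x) x)
    (K : NNReal) (hlip : LipschitzOnWith K g Ω) (κ : ℝ) :
    ConvexOn ℝ Ω (fun x => φ x - κ / 2 * ‖x‖ ^ 2) ↔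
      ∀ x ∈ Ω, ∀ w z : EuclideanSpace ℝ (Fin n),
        (w, z) ∈ contTangentCone {p : EuclideanSpace ℝ (Fin n) × EuclideanSpace ℝ (Fin n) | p.1 ∈ Ω ∧ p.2 = g p.1} (x, g x) →
        κ * ‖w‖ ^ 2 ≤ ⟪z, w⟫ := by
  rw [convexOn_sub_half_mul_norm_sq_iff hΩconv hgrad]
  exact ⟨fun hmono _ hx _ _ => mul_norm_sq_le_inner_of_mem_contTangentCone hmono hx,
    fun htan _ hx _ hy => mul_norm_sq_le_inner_sub_of_contTangentCone hopen hΩconv hlip htan hx hy⟩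

/-- strong convexity on an open convex set characterized via tangent
cones to the graph of the gradient. -/
theorem statement6 (n : ℕ) (Ω : Set (EuclideanSpace ℝ (Fin n)))
    (hne : Ω.Nonempty) (hopen : IsOpen Ω) (hΩconv : Convex ℝ Ω)
    (φ : EuclideanSpace ℝ (Fin n) → ℝ) (g : EuclideanSpace ℝ (Fin n) → EuclideanSpace ℝ (Fin n))
    (hgrad : ∀ x ∈ Ω, HasGradientAt φ (g x) x)
    (K : NNReal) (hlip : LipschitzOnWith K g Ω) (κ : ℝ) (hκ : 0 < κ) :
    ConvexOn ℝ Ω (fun x => φ x - κ / 2 * ‖x‖ ^ 2) ↔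
      ∀ x ∈ Ω, ∀ w z : EuclideanSpace ℝ (Fin n),
        (w, z) ∈ contTangentCone {p : EuclideanSpace ℝ (Fin n) × EuclideanSpace ℝ (Fin n) | p.1 ∈ Ω ∧ p.2 = g p.1} (x, g x) →
        κ * ‖w‖ ^ 2 ≤ ⟪z, w⟫ :=
  statement6_general n Ω hopen hΩconv φ g hgrad K hlip κ

end
end
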